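/- Fix an integer D ≥ 2. If the split graph G_D(f) admits a (2n,D)-coloring, then the 3CNF formula f has a satisfying assignment. -/
import Mathlib


/-- The deficiency of a vertex `v` under a coloring `c`: the number of neighbors
of `v` whose color equals `c v`. -/
noncomputable def deficiency {V α : Type*} (G : SimpleGraph V) (c : V → α) (v : V) : ℕ :=
  {w | G.Adj v w ∧ c w = c v}.ncard

/-- `c` is a `(C,D)`-coloring (with colors `Fin C`): every vertex has at most `D`
neighbors of its own color. -/
def IsDefColoring {V α : Type*} (G : SimpleGraph V) (D : ℕ) (c : V → α) : Prop :=
  ∀ v, deficiency G c v ≤ D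

/-- A 3CNF formula with `n` variables and `m` clauses: each clause `j` consists of three
literals `lit j 0, lit j 1, lit j 2`, a literal being a pair of a variable index and a
Boolean (`true` for a positive occurrence), over pairwise distinct variables. -/
structure CNF3 (n m : ℕ) where
  lit : Fin m → Fin 3 → Fin n × Bool
  distinct : ∀ j : Fin m, Function.Injective (fun a => (lit j a).1)

/-- `s` satisfies `f`: every clause contains a literal made true by `s`. -/
def CNF3.Satisfies {n m : ℕ} (f : CNF3 n m) (s : Fin n → Bool) : Prop :=
  ∀ j : Fin m, ∃ a : Fin 3, s (f.lit j a).1 = (f.lit j a).2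

/-- Vertices of the split graph `G_D(f)`: clique vertices `u_i^k` (`k ∈ {A,B,C,D}`
encoded as `Fin 4` with `A=0, B=1, C=2, D=3`) together with the extra clique vertices of
`U_i^A` (tagged `false`) and `U_i^D` (tagged `true`), each of size `D-1`; and
independent-set vertices `z_i^A` (tagged `false`), `z_i^D` (tagged `true`) and `v_j`. -/
abbrev SatVtxD (n m D : ℕ) :=
  ((Fin n × Fin 4) ⊕ (Fin n × Bool × Fin (D - 1))) ⊕ ((Fin n × Bool) ⊕ Fin m)

/-- The edges of `G_D(f)`, oriented from the clique side: `U` is a clique, `Z` is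
independent; `z_i^A` (resp. `z_i^D`) is non-adjacent exactly to the vertices
`u_i^{kᵒ}, kᵒ ≠ A` (resp. `kᵒ ≠ D`) of its own quadruple and to `U_i^D` (resp. `U_i^A`);
`v_j` is non-adjacent to `u_i^A, u_i^B` (resp. `u_i^A, u_i^C`) when `x_i` occurs
positively (resp. negatively) in clause `j`, and to all of `U_i^A` whenever clause `j`
contains variable `x_i`; all other `U`–`Z` edges are present. -/
def satRelD {n m : ℕ} (f : CNF3 n m) (D : ℕ) :
    SatVtxD n m D → SatVtxD n m D → Prop
  | Sum.inl _, Sum.inl _ => True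
  | Sum.inl (Sum.inl (i, k)), Sum.inr (Sum.inl (iz, b)) =>
      i ≠ iz ∨ k = (if b then 3 else 0)
  | Sum.inl (Sum.inl (i, k)), Sum.inr (Sum.inr j) =>
      ¬ ∃ a : Fin 3, (f.lit j a).1 = i ∧
        (((f.lit j a).2 = true ∧ (k = 0 ∨ k = 1)) ∨
         ((f.lit j a).2 = false ∧ (k = 0 ∨ k = 2)))
  | Sum.inl (Sum.inr (i, b, _)), Sum.inr (Sum.inl (iz, bz)) => i ≠ iz ∨ b = bz
  | Sum.inl (Sum.inr (i, b, _)), Sum.inr (Sum.inr j) =>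
      b = true ∨ ¬ ∃ a : Fin 3, (f.lit j a).1 = i
  | Sum.inr _, _ => False

/-- The split graph `G_D(f)`. -/
def satGraphD {n m : ℕ} (f : CNF3 n m) (D : ℕ) : SimpleGraph (SatVtxD n m D) :=
  SimpleGraph.fromRel (satRelD f D)

private lemma card_le_def {V α : Type*} [Fintype V] (G : SimpleGraph V) (c : V → α) (v : V)
    (T : Finset V) (hT : ∀ w ∈ T, G.Adj v w ∧ c w = c v) : T.card ≤ deficiency G c v := by
  rw [← Set.ncard_coe_finset]
  exact Set.ncard_le_ncard (fun w hw => hT w (by simpa using hw)) (Set.toFinite _)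

private lemma rel_inl_inl_eq_true {n m : ℕ} (f : CNF3 n m) (D : ℕ)
    (u u' : (Fin n × Fin 4) ⊕ (Fin n × Bool × Fin (D-1))) :
    satRelD f D (Sum.inl u) (Sum.inl u') = True := by
  rcases u with ⟨i,k⟩|⟨i,b,t⟩ <;> rcases u' with ⟨i',k'⟩|⟨i',b',t'⟩ <;> rfl

private lemma rel_inr_eq_false {n m : ℕ} (f : CNF3 n m) (D : ℕ)
    (z : (Fin n × Bool) ⊕ Fin m) (w : SatVtxD n m D) :
    satRelD f D (Sum.inr z) w = False := by
  rcases z with ⟨i,b⟩|j <;> rcases w with (⟨i2,k2⟩|⟨i2,b2,t2⟩)|(⟨i2,b2⟩|j2) <;> rfl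

private lemma adj_inl_inl {n m : ℕ} (f : CNF3 n m) (D : ℕ)
    (u u' : (Fin n × Fin 4) ⊕ (Fin n × Bool × Fin (D-1))) :
    (satGraphD f D).Adj (Sum.inl u) (Sum.inl u') ↔ u ≠ u' := by
  rw [satGraphD, SimpleGraph.fromRel_adj, rel_inl_inl_eq_true, rel_inl_inl_eq_true]
  simp

private lemma adj_inl_inr {n m : ℕ} (f : CNF3 n m) (D : ℕ)
    (u : (Fin n × Fin 4) ⊕ (Fin n × Bool × Fin (D-1))) (z : (Fin n × Bool) ⊕ Fin m) :
    (satGraphD f D).Adj (Sum.inl u) (Sum.inr z) ↔ satRelD f D (Sum.inl u) (Sum.inr z) := by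
  rw [satGraphD, SimpleGraph.fromRel_adj, rel_inr_eq_false]
  simp

private def QsetD {n m : ℕ} (D : ℕ) (c : SatVtxD n m D → Fin (2*n)) (q : Fin (2*n)) :
    Finset ((Fin n × Fin 4) ⊕ (Fin n × Bool × Fin (D-1))) :=
  Finset.univ.filter (fun u => c (Sum.inl u) = q)

private lemma mem_QsetD {n m : ℕ} {D : ℕ} {c : SatVtxD n m D → Fin (2*n)} {q : Fin (2*n)}
    {u : (Fin n × Fin 4) ⊕ (Fin n × Bool × Fin (D-1))} :
    u ∈ QsetD D c q ↔ c (Sum.inl u) = q := by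
  simp [QsetD]

private lemma Qcard_le {n m D : ℕ} (f : CNF3 n m) (c : SatVtxD n m D → Fin (2*n))
    (hc : IsDefColoring (satGraphD f D) D c) (q : Fin (2*n)) :
    (QsetD D c q).card ≤ D + 1 := by
  rcases (QsetD D c q).eq_empty_or_nonempty with he | ⟨u, hu⟩
  · simp [he]
  · have hq : c (Sum.inl u) = q := mem_QsetD.mp hu
    have hsub : ∀ w ∈ ((QsetD D c q).erase u).image Sum.inl,
        (satGraphD f D).Adj (Sum.inl u) w ∧ c w = c (Sum.inl u) := by
      intro w hw
      simp only [Finset.mem_image, Finset.mem_erase] at hw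
      obtain ⟨u', ⟨hne, hu'⟩, rfl⟩ := hw
      exact ⟨(adj_inl_inl f D u u').mpr (Ne.symm hne),
        by rw [mem_QsetD.mp hu', hq]⟩
    have h1 := card_le_def (satGraphD f D) c (Sum.inl u) _ hsub
    rw [Finset.card_image_of_injective _ Sum.inl_injective,
      Finset.card_erase_of_mem hu] at h1
    have h2 := hc (Sum.inl u)
    omega

private lemma Qcard {n m D : ℕ} (hD : 2 ≤ D) (f : CNF3 n m) (c : SatVtxD n m D → Fin (2*n))
    (hc : IsDefColoring (satGraphD f D) D c) (q : Fin (2*n)) :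
    (QsetD D c q).card = D + 1 := by
  by_contra hq0
  have hlt : (QsetD D c q).card < D + 1 := lt_of_le_of_ne (Qcard_le f c hc q) hq0
  have hsum : ∑ q' : Fin (2*n), (QsetD D c q').card < ∑ _q' : Fin (2*n), (D+1) :=
    Finset.sum_lt_sum (fun q' _ => Qcard_le f c hc q') ⟨q, Finset.mem_univ _, hlt⟩
  have htot : ∑ q' : Fin (2*n), (QsetD D c q').card
      = Fintype.card ((Fin n × Fin 4) ⊕ (Fin n × Bool × Fin (D-1))) := by
    rw [← Finset.card_univ]
    exact (Finset.card_eq_sum_card_fiberwise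
      (f := fun u => c (Sum.inl u)) (fun u _ => Finset.mem_univ _)).symm
  rw [htot, Finset.sum_const, Finset.card_univ, smul_eq_mul] at hsum
  simp only [Fintype.card_sum, Fintype.card_prod, Fintype.card_fin, Fintype.card_bool,
    Fintype.card_fin] at hsum
  obtain ⟨e, rfl⟩ : ∃ e, D = e + 2 := ⟨D - 2, by omega⟩
  have heq : n * 4 + n * (2 * (e + 2 - 1)) = 2 * n * (e + 2 + 1) := by
    have h1 : e + 2 - 1 = e + 1 := rfl
    rw [h1]; ring
  rw [heq] at hsum
  exact lt_irrefl _ hsum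

private lemma no_same_color {n m D : ℕ} (hD : 2 ≤ D) (f : CNF3 n m)
    (c : SatVtxD n m D → Fin (2*n)) (hc : IsDefColoring (satGraphD f D) D c)
    (u : (Fin n × Fin 4) ⊕ (Fin n × Bool × Fin (D-1))) (z : (Fin n × Bool) ⊕ Fin m)
    (hadj : (satGraphD f D).Adj (Sum.inl u) (Sum.inr z)) :
    c (Sum.inl u) ≠ c (Sum.inr z) := by
  intro heq
  have hu : u ∈ QsetD D c (c (Sum.inl u)) := mem_QsetD.mpr rfl
  have hsub : ∀ w ∈ insert (Sum.inr z : SatVtxD n m D)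
      (((QsetD D c (c (Sum.inl u))).erase u).image Sum.inl),
      (satGraphD f D).Adj (Sum.inl u) w ∧ c w = c (Sum.inl u) := by
    intro w hw
    rcases Finset.mem_insert.mp hw with rfl | hw
    · exact ⟨hadj, heq.symm⟩
    · simp only [Finset.mem_image, Finset.mem_erase] at hw
      obtain ⟨u', ⟨hne, hu'⟩, rfl⟩ := hw
      exact ⟨(adj_inl_inl f D u u').mpr (Ne.symm hne), mem_QsetD.mp hu'⟩
  have h1 := card_le_def (satGraphD f D) c (Sum.inl u) _ hsub
  rw [Finset.card_insert_of_notMem (by simp),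
    Finset.card_image_of_injective _ Sum.inl_injective,
    Finset.card_erase_of_mem hu, Qcard hD f c hc] at h1
  have h2 := hc (Sum.inl u)
  omega

private lemma keyN {n m D : ℕ} (hD : 2 ≤ D) (f : CNF3 n m)
    (c : SatVtxD n m D → Fin (2*n)) (hc : IsDefColoring (satGraphD f D) D c)
    (u : (Fin n × Fin 4) ⊕ (Fin n × Bool × Fin (D-1))) (z : (Fin n × Bool) ⊕ Fin m)
    (h : c (Sum.inl u) = c (Sum.inr z)) : ¬ satRelD f D (Sum.inl u) (Sum.inr z) :=
  fun hrel => no_same_color hD f c hc u z ((adj_inl_inr f D u z).mpr hrel) h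

private lemma key1 {n m D : ℕ} (hD : 2 ≤ D) (f : CNF3 n m)
    (c : SatVtxD n m D → Fin (2*n)) (hc : IsDefColoring (satGraphD f D) D c)
    (i : Fin n) (b : Bool) (i' : Fin n) (k : Fin 4)
    (h : c (Sum.inl (Sum.inl (i', k))) = c (Sum.inr (Sum.inl (i, b)))) :
    i' = i ∧ k ≠ (if b then 3 else 0) := by
  have hn := keyN hD f c hc (Sum.inl (i', k)) (Sum.inl (i, b)) h
  simp only [satRelD] at hn
  push_neg at hn
  exact hn

private lemma key2 {n m D : ℕ} (hD : 2 ≤ D) (f : CNF3 n m)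
    (c : SatVtxD n m D → Fin (2*n)) (hc : IsDefColoring (satGraphD f D) D c)
    (i : Fin n) (b : Bool) (i' : Fin n) (b' : Bool) (t : Fin (D-1))
    (h : c (Sum.inl (Sum.inr (i', b', t))) = c (Sum.inr (Sum.inl (i, b)))) :
    i' = i ∧ b' ≠ b := by
  have hn := keyN hD f c hc (Sum.inr (i', b', t)) (Sum.inl (i, b)) h
  simp only [satRelD] at hn
  push_neg at hn
  exact hn

private lemma key3 {n m D : ℕ} (hD : 2 ≤ D) (f : CNF3 n m)
    (c : SatVtxD n m D → Fin (2*n)) (hc : IsDefColoring (satGraphD f D) D c)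
    (j : Fin m) (i' : Fin n) (k : Fin 4)
    (h : c (Sum.inl (Sum.inl (i', k))) = c (Sum.inr (Sum.inr j))) :
    ∃ a : Fin 3, (f.lit j a).1 = i' ∧
      (((f.lit j a).2 = true ∧ (k = 0 ∨ k = 1)) ∨
       ((f.lit j a).2 = false ∧ (k = 0 ∨ k = 2))) := by
  have hn := keyN hD f c hc (Sum.inl (i', k)) (Sum.inr j) h
  simp only [satRelD, not_not] at hn
  exact hn

/-- For `D ≥ 2`: if `G_D(f)` admits a `(2n,D)`-coloring, then the 3CNF formula `f` is
satisfiable. -/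
theorem stmt16 {n m : ℕ} (D : ℕ) (hD : 2 ≤ D) (f : CNF3 n m)
    (h : ∃ c : SatVtxD n m D → Fin (2 * n), IsDefColoring (satGraphD f D) D c) :
    ∃ s : Fin n → Bool, f.Satisfies s := by
  classical
  obtain ⟨c, hc⟩ := h
  -- the "z"-colors map is injective
  have hginj : Function.Injective (fun p : Fin n × Bool => c (Sum.inr (Sum.inl p))) := by
    intro p p' he
    by_contra hne
    obtain ⟨i, b⟩ := p
    obtain ⟨i', b'⟩ := p'
    simp only at he
    have hcard := Qcard hD f c hc (c (Sum.inr (Sum.inl (i, b))))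
    rcases eq_or_ne i i' with rfl | hii
    · have hbb : b ≠ b' := by
        intro hb; exact hne (by rw [hb])
      have hsub : QsetD D c (c (Sum.inr (Sum.inl (i, b)))) ⊆
          {Sum.inl (i, 1), Sum.inl (i, 2)} := by
        intro u hu
        have hcu := mem_QsetD.mp hu
        rcases u with ⟨i0, k⟩ | ⟨i0, b0, t⟩
        · obtain ⟨rfl, hk1⟩ := key1 hD f c hc _ _ _ _ hcu
          obtain ⟨-, hk2⟩ := key1 hD f c hc _ _ _ _ (hcu.trans he)
          simp only [Finset.mem_insert, Finset.mem_singleton]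
          cases b <;> cases b' <;> simp_all <;> · fin_cases k <;> simp_all
        · obtain ⟨-, hb1⟩ := key2 hD f c hc _ _ _ _ _ hcu
          obtain ⟨-, hb2⟩ := key2 hD f c hc _ _ _ _ _ (hcu.trans he)
          cases b <;> cases b' <;> simp_all
      have hle := Finset.card_le_card hsub
      rw [hcard] at hle
      have h2 : ({Sum.inl (i, 1), Sum.inl (i, 2)} :
          Finset ((Fin n × Fin 4) ⊕ (Fin n × Bool × Fin (D-1)))).card ≤ 2 :=
        (Finset.card_insert_le _ _).trans (by simp)
      omega
    · have hne' : (QsetD D c (c (Sum.inr (Sum.inl (i, b))))).Nonempty := by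
        rw [← Finset.card_pos, hcard]; omega
      obtain ⟨u, hu⟩ := hne'
      have hcu := mem_QsetD.mp hu
      rcases u with ⟨i0, k⟩ | ⟨i0, b0, t⟩
      · obtain ⟨rfl, -⟩ := key1 hD f c hc _ _ _ _ hcu
        obtain ⟨rfl, -⟩ := key1 hD f c hc _ _ _ _ (hcu.trans he)
        exact hii rfl
      · obtain ⟨rfl, -⟩ := key2 hD f c hc _ _ _ _ _ hcu
        obtain ⟨rfl, -⟩ := key2 hD f c hc _ _ _ _ _ (hcu.trans he)
        exact hii rfl
  have hgsurj : Function.Surjective (fun p : Fin n × Bool => c (Sum.inr (Sum.inl p))) := by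
    have hcards : Fintype.card (Fin n × Bool) = Fintype.card (Fin (2*n)) := by
      simp [Fintype.card_prod, mul_comm]
    exact ((Fintype.bijective_iff_injective_and_card _).mpr ⟨hginj, hcards⟩).2
  -- each quadruple vertex gets a color of its own pair
  have hcolor : ∀ (i : Fin n) (k : Fin 4), ∃ b : Bool,
      c (Sum.inl (Sum.inl (i, k))) = c (Sum.inr (Sum.inl (i, b))) := by
    intro i k
    obtain ⟨⟨i2, b2⟩, hp⟩ := hgsurj (c (Sum.inl (Sum.inl (i, k))))
    simp only at hp
    obtain ⟨rfl, -⟩ := key1 hD f c hc _ _ _ _ hp.symm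
    exact ⟨b2, hp.symm⟩
  have hUD : ∀ i : Fin n,
      c (Sum.inl (Sum.inl (i, 3))) = c (Sum.inr (Sum.inl (i, false))) := by
    intro i
    obtain ⟨b, hb⟩ := hcolor i 3
    cases b
    · exact hb
    · obtain ⟨-, hk⟩ := key1 hD f c hc _ _ _ _ hb
      simp at hk
  have hUA : ∀ i : Fin n,
      c (Sum.inl (Sum.inl (i, 0))) = c (Sum.inr (Sum.inl (i, true))) := by
    intro i
    obtain ⟨b, hb⟩ := hcolor i 0
    cases b
    · obtain ⟨-, hk⟩ := key1 hD f c hc _ _ _ _ hb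
      simp at hk
    · exact hb
  have hExtra : ∀ (i : Fin n) (t : Fin (D-1)),
      c (Sum.inl (Sum.inr (i, false, t))) = c (Sum.inr (Sum.inl (i, true))) := by
    intro i t
    obtain ⟨⟨i2, b2⟩, hp⟩ := hgsurj (c (Sum.inl (Sum.inr (i, false, t))))
    simp only at hp
    obtain ⟨rfl, hb⟩ := key2 hD f c hc _ _ _ _ _ hp.symm
    cases b2
    · simp at hb
    · exact hp.symm
  -- one of u_i^B, u_i^C has the color of z_i^D
  have hBC : ∀ i : Fin n,
      c (Sum.inl (Sum.inl (i, 1))) = c (Sum.inr (Sum.inl (i, true))) ∨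
      c (Sum.inl (Sum.inl (i, 2))) = c (Sum.inr (Sum.inl (i, true))) := by
    intro i
    by_contra hcon
    push_neg at hcon
    obtain ⟨h1, h2⟩ := hcon
    have hsub : QsetD D c (c (Sum.inr (Sum.inl (i, true)))) ⊆
        insert (Sum.inl (i, 0))
          ((Finset.univ : Finset (Fin (D-1))).image
            (fun t => Sum.inr (i, false, t))) := by
      intro u hu
      have hcu := mem_QsetD.mp hu
      rcases u with ⟨i0, k⟩ | ⟨i0, b0, t⟩
      · obtain ⟨rfl, hk⟩ := key1 hD f c hc _ _ _ _ hcu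
        have hk0 : k = 0 := by
          fin_cases k
          · rfl
          · exact absurd hcu h1
          · exact absurd hcu h2
          · simp at hk
        subst hk0
        simp
      · obtain ⟨rfl, hb⟩ := key2 hD f c hc _ _ _ _ _ hcu
        cases b0
        · simp
        · simp at hb
    have hle := Finset.card_le_card hsub
    rw [Qcard hD f c hc] at hle
    replace hle := hle.trans (Finset.card_insert_le _ _)
    replace hle := hle.trans (Nat.add_le_add_right Finset.card_image_le 1)
    rw [Finset.card_univ, Fintype.card_fin] at hle
    omega
  -- the satisfying assignment
  refine ⟨fun i => decide (c (Sum.inl (Sum.inl (i, 2))) = c (Sum.inr (Sum.inl (i, false)))), ?_⟩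
  intro j
  obtain ⟨⟨i', b⟩, hp⟩ := hgsurj (c (Sum.inr (Sum.inr j)))
  simp only at hp
  have hb : b = true := by
    cases b
    · exfalso
      have h3 : c (Sum.inl (Sum.inl (i', 3))) = c (Sum.inr (Sum.inr j)) :=
        (hUD i').trans hp
      obtain ⟨a, -, ha2⟩ := key3 hD f c hc j i' 3 h3
      rcases ha2 with ⟨-, h4 | h4⟩ | ⟨-, h4 | h4⟩ <;> exact absurd h4 (by decide)
    · rfl
  subst hb
  have h0 : c (Sum.inl (Sum.inl (i', 0))) = c (Sum.inr (Sum.inr j)) := (hUA i').trans hp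
  obtain ⟨a, ha1, -⟩ := key3 hD f c hc j i' 0 h0
  refine ⟨a, ?_⟩
  rw [ha1]
  show decide (c (Sum.inl (Sum.inl (i', 2))) = c (Sum.inr (Sum.inl (i', false))))
      = (f.lit j a).2
  rcases hε : (f.lit j a).2 with _ | _
  · -- negative occurrence
    rw [decide_eq_false_iff_not]
    intro hC
    rcases hBC i' with hB | hC2
    · have h1 : c (Sum.inl (Sum.inl (i', 1))) = c (Sum.inr (Sum.inr j)) := hB.trans hp
      obtain ⟨a', ha1', ha2'⟩ := key3 hD f c hc j i' 1 h1
      have haa : a' = a := f.distinct j (by simp only; rw [ha1', ha1])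
      subst haa
      rcases ha2' with ⟨hpos, -⟩ | ⟨-, h4 | h4⟩
      · rw [hε] at hpos; simp at hpos
      · exact absurd h4 (by decide)
      · exact absurd h4 (by decide)
    · have h5 : ((i', false) : Fin n × Bool) = (i', true) := hginj (hC.symm.trans hC2)
      simp at h5
  · -- positive occurrence
    rw [decide_eq_true_eq]
    obtain ⟨b2, hb2⟩ := hcolor i' 2
    cases b2
    · exact hb2
    · exfalso
      have h2 : c (Sum.inl (Sum.inl (i', 2))) = c (Sum.inr (Sum.inr j)) := hb2.trans hp
      obtain ⟨a', ha1', ha2'⟩ := key3 hD f c hc j i' 2 h2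
      have haa : a' = a := f.distinct j (by simp only; rw [ha1', ha1])
      subst haa
      rcases ha2' with ⟨-, h4 | h4⟩ | ⟨hneg, -⟩
      · exact absurd h4 (by decide)
      · exact absurd h4 (by decide)
      · rw [hε] at hneg; simp at hneg
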